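/- arXiv:1402.4344 — 2 statements merged into one kernel-verified Lean document; each statement's English description precedes it below -/
import Mathlib

section
/- Let 0 < r < 1, s ≥ 1, 1 ≤ p, δ ∈ (0,1), n ≥ 2, and let P = {(x₁, x') ∈ ℝ × ℝ^{n−1} : 0 < x₁ < r, |x'| < r^s} be a cylindrical stem. Let u be the linear function u(x) = x₁/r on P. Then ∫_P ∫_{P ∩ B(x, τ d(x,∂P))} |u(x) − u(y)|^p / |x−y|^{n+pδ} dy dx ≤ C r^{s(n−pδ)+(s−1)(p−1)}, where C depends only on n, p, δ, τ and d(x,∂P) is the distance of x to the boundary of P. -/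
/-!
Write `d = n + 2`. Since `u` is `1/r`-Lipschitz, the integrand is at most
`r^{-p} |x - y|^{p(1-δ) - d}`, whose integral over `B(x, ρ)` is `ρ^{p(1-δ)}` times a dimensional
constant by scaling, the singularity being integrable because `p(1-δ) > 0`. A point of the stem
lies within `2 r^s` of its boundary, so the inner integral is `≲ r^{-p} r^{s p (1-δ)}` uniformly
in `x`, and the stem has volume `≤ r (2 r^s)^{d-1}`; multiplying gives exactly the power
`r^{s(d - pδ) + (s-1)(p-1)}`.
-/
open Metric MeasureTheory ENNReal

/-- The cylindrical stem `P = {(x₁,x') : 0 < x₁ < r, |x'| < r^s}` in `ℝ^{n+2}`. -/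
noncomputable def stem (n : ℕ) (r s : ℝ) : Set (EuclideanSpace ℝ (Fin (n + 2))) :=
  {x | 0 < x 0 ∧ x 0 < r ∧ ∑ i ∈ Finset.univ.erase 0, (x i) ^ 2 < (r ^ s) ^ 2}

open Module

theorem rpow_abs_sub_div_dist_rpow_le {X : Type*} [MetricSpace X] {u : X → ℝ} {L p : ℝ}
    (hL : 0 ≤ L) (hu : ∀ x y, |u x - u y| ≤ L * dist x y) (hp : 0 < p) (γ : ℝ) (x y : X) :
    |u x - u y| ^ p / dist x y ^ γ ≤ L ^ p * dist x y ^ (p - γ) := by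
  rcases eq_or_ne x y with rfl | hxy
  · simp only [sub_self, abs_zero, Real.zero_rpow hp.ne', zero_div]
    positivity
  have hdist : 0 < dist x y := dist_pos.2 hxy
  calc |u x - u y| ^ p / dist x y ^ γ ≤ (L * dist x y) ^ p / dist x y ^ γ := by
        gcongr
        exact hu x y
    _ = L ^ p * dist x y ^ (p - γ) := by
      rw [Real.mul_rpow hL hdist.le, mul_div_assoc, Real.rpow_sub hdist]

section AddHaar

variable {E : Type*} [NormedAddCommGroup E] [NormedSpace ℝ E] [FiniteDimensional ℝ E]
  [MeasurableSpace E] [BorelSpace E] (μ : Measure E) [μ.IsAddHaarMeasure]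

theorem setLIntegral_ball_dist_rpow (x : E) {R : ℝ} (hR : 0 < R) (β : ℝ) :
    ∫⁻ y in ball x R, ENNReal.ofReal (dist x y ^ β) ∂μ =
      ENNReal.ofReal (R ^ (β + finrank ℝ E)) * ∫⁻ z in ball 0 1, ENNReal.ofReal (‖z‖ ^ β) ∂μ := by
  set g : E → ℝ≥0∞ := (ball 0 1).indicator fun z => ENNReal.ofReal (‖z‖ ^ β)
  have hg : Measurable g := by fun_prop (disch := exact measurableSet_ball)
  have hrescale : ∀ y, (ball x R).indicator (fun y => ENNReal.ofReal (dist x y ^ β)) y =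
      ENNReal.ofReal (R ^ β) * g (R⁻¹ • (y - x)) := by
    intro y
    have hnorm : ‖R⁻¹ • (y - x)‖ = R⁻¹ * dist x y := by
      rw [norm_smul, Real.norm_of_nonneg (inv_nonneg.2 hR.le), dist_comm, dist_eq_norm]
    have hmem : y ∈ ball x R ↔ R⁻¹ • (y - x) ∈ ball (0 : E) 1 := by
      rw [mem_ball_zero_iff, hnorm, mem_ball, dist_comm, inv_mul_lt_iff₀ hR, mul_one]
    by_cases hy : y ∈ ball x R
    · rw [Set.indicator_of_mem hy,
        show g (R⁻¹ • (y - x)) = _ from Set.indicator_of_mem (hmem.1 hy) _, hnorm,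
        ← ENNReal.ofReal_mul (Real.rpow_nonneg hR.le _), ← Real.mul_rpow hR.le (by positivity),
        mul_inv_cancel_left₀ hR.ne']
    · rw [Set.indicator_of_notMem hy,
        show g (R⁻¹ • (y - x)) = 0 from Set.indicator_of_notMem (mt hmem.2 hy) _, mul_zero]
  calc ∫⁻ y in ball x R, ENNReal.ofReal (dist x y ^ β) ∂μ
      = ∫⁻ y, ENNReal.ofReal (R ^ β) * g (R⁻¹ • (y - x)) ∂μ := by
        rw [← lintegral_indicator measurableSet_ball]
        exact lintegral_congr hrescale
    _ = ENNReal.ofReal (R ^ β) * ∫⁻ y, g y ∂(Measure.map (R⁻¹ • ·) μ) := by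
        rw [lintegral_const_mul' _ _ ENNReal.ofReal_ne_top,
          lintegral_sub_right_eq_self (g <| R⁻¹ • ·), lintegral_map hg (measurable_const_smul _)]
    _ = ENNReal.ofReal (R ^ (β + finrank ℝ E)) *
          ∫⁻ z in ball 0 1, ENNReal.ofReal (‖z‖ ^ β) ∂μ := by
        rw [Measure.map_addHaar_smul μ (inv_ne_zero hR.ne'), lintegral_smul_measure, smul_eq_mul,
          lintegral_indicator measurableSet_ball, ← mul_assoc, ← ENNReal.ofReal_mul
          (Real.rpow_nonneg hR.le _), inv_pow, inv_inv, abs_of_pos (by positivity),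
          Real.rpow_add hR, Real.rpow_natCast]

theorem setLIntegral_ball_norm_rpow_lt_top (hd : 1 ≤ finrank ℝ E) {α : ℝ} (hα : 0 < α) :
    ∫⁻ z in ball (0 : E) 1, ENNReal.ofReal (‖z‖ ^ (α - finrank ℝ E)) ∂μ < ∞ := by
  refine Integrable.lintegral_lt_top (integrableOn_ball_of_norm_le_rpow (C := 1) hd
    (α := finrank ℝ E - α) (by linarith) (.of_forall fun z => ?_)
    (measurable_norm.pow_const _).aestronglyMeasurable)
  rw [one_mul, neg_sub, Real.norm_of_nonneg (Real.rpow_nonneg (norm_nonneg z) _)]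

theorem exists_setLIntegral_ball_dist_rpow_le (hd : 1 ≤ finrank ℝ E) {α : ℝ} (hα : 0 < α) :
    ∃ c : ℝ, 0 < c ∧ ∀ (x : E) (R : ℝ), 0 ≤ R →
      ∫⁻ y in ball x R, ENNReal.ofReal (dist x y ^ (α - finrank ℝ E)) ∂μ ≤
        ENNReal.ofReal (c * R ^ α) := by
  set I := ∫⁻ z in ball (0 : E) 1, ENNReal.ofReal (‖z‖ ^ (α - finrank ℝ E)) ∂μ
  refine ⟨I.toReal + 1, by positivity, fun x R hR => ?_⟩
  rcases hR.eq_or_lt with rfl | hR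
  · simp
  rw [setLIntegral_ball_dist_rpow μ x hR, sub_add_cancel, mul_comm,
    ENNReal.ofReal_mul (by positivity),
    ENNReal.ofReal_add ENNReal.toReal_nonneg zero_le_one,
    ENNReal.ofReal_toReal (setLIntegral_ball_norm_rpow_lt_top μ hd hα).ne]
  gcongr
  exact le_self_add

theorem exists_setLIntegral_inter_ball_fractional_le (hd : 1 ≤ finrank ℝ E) {p δ : ℝ}
    (hp : 0 < p) (hδ : δ < 1) :
    ∃ c : ℝ, 0 < c ∧ ∀ (u : E → ℝ) (L : ℝ), 0 ≤ L → (∀ x y, |u x - u y| ≤ L * dist x y) →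
      ∀ (S : Set E) (x : E) (ρ : ℝ), 0 ≤ ρ →
        ∫⁻ y in S ∩ ball x ρ,
            ENNReal.ofReal (|u x - u y| ^ p / dist x y ^ (finrank ℝ E + p * δ)) ∂μ ≤
          ENNReal.ofReal (c * L ^ p * ρ ^ (p * (1 - δ))) := by
  obtain ⟨c, hc, hball⟩ :=
    exists_setLIntegral_ball_dist_rpow_le μ hd (α := p * (1 - δ)) (by nlinarith)
  refine ⟨c, hc, fun u L hL hu S x ρ hρ => ?_⟩
  have hquot : ∀ y, |u x - u y| ^ p / dist x y ^ (finrank ℝ E + p * δ) ≤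
      L ^ p * dist x y ^ (p * (1 - δ) - finrank ℝ E) := fun y => by
    convert rpow_abs_sub_div_dist_rpow_le hL hu hp _ x y using 3
    ring
  calc ∫⁻ y in S ∩ ball x ρ,
          ENNReal.ofReal (|u x - u y| ^ p / dist x y ^ (finrank ℝ E + p * δ)) ∂μ
      ≤ ∫⁻ y in ball x ρ, ENNReal.ofReal (L ^ p * dist x y ^ (p * (1 - δ) - finrank ℝ E)) ∂μ :=
        (lintegral_mono_set Set.inter_subset_right).trans
          (lintegral_mono fun y => ENNReal.ofReal_le_ofReal (hquot y))
    _ = ENNReal.ofReal (L ^ p) *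
          ∫⁻ y in ball x ρ, ENNReal.ofReal (dist x y ^ (p * (1 - δ) - finrank ℝ E)) ∂μ := by
        simp_rw [ENNReal.ofReal_mul (Real.rpow_nonneg hL p)]
        exact lintegral_const_mul' _ _ ENNReal.ofReal_ne_top
    _ ≤ ENNReal.ofReal (L ^ p) * ENNReal.ofReal (c * ρ ^ (p * (1 - δ))) := by
        gcongr
        exact hball x ρ hρ
    _ = ENNReal.ofReal (c * L ^ p * ρ ^ (p * (1 - δ))) := by
        rw [← ENNReal.ofReal_mul (Real.rpow_nonneg hL p)]
        ring_nf

end AddHaar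

theorem infDist_frontier_le_dist_of_mem_of_notMem {E : Type*} [NormedAddCommGroup E]
    [NormedSpace ℝ E] [FiniteDimensional ℝ E] {U : Set E} {x y : E} (hx : x ∈ U) (hy : y ∉ U) :
    infDist x (frontier U) ≤ dist x y := by
  obtain ⟨z, hz, hxz⟩ :=
    exists_mem_frontier_infDist_compl_eq_dist hx fun h => hy (h ▸ Set.mem_univ y)
  calc infDist x (frontier U) ≤ dist x z := infDist_le_dist_of_mem hz
    _ = infDist x Uᶜ := hxz.symm
    _ ≤ dist x y := infDist_le_dist_of_mem hy

theorem abs_apply_div_sub_apply_div_le {m : ℕ} {r : ℝ} (hr : 0 < r)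
    (x y : EuclideanSpace ℝ (Fin m)) (i : Fin m) : |x i / r - y i / r| ≤ r⁻¹ * dist x y := by
  rw [← sub_div, abs_div, abs_of_pos hr, div_eq_inv_mul, ← Real.dist_eq]
  exact mul_le_mul_of_nonneg_left (PiLp.dist_apply_le x y i) (inv_nonneg.2 hr.le)

section Stem

variable {n : ℕ} {r s : ℝ}

theorem abs_apply_lt_of_mem_stem (hr : 0 < r) {x : EuclideanSpace ℝ (Fin (n + 2))}
    (hx : x ∈ stem n r s) {i : Fin (n + 2)} (hi : i ≠ 0) : |x i| < r ^ s := by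
  have hle : x i ^ 2 ≤ ∑ j ∈ Finset.univ.erase 0, x j ^ 2 :=
    Finset.single_le_sum (fun j _ => sq_nonneg (x j)) (Finset.mem_erase.2 ⟨hi, Finset.mem_univ i⟩)
  exact abs_lt_of_sq_lt_sq (hle.trans_lt hx.2.2) (Real.rpow_pos_of_pos hr s).le

theorem infDist_frontier_stem_le (hr : 0 < r) {x : EuclideanSpace ℝ (Fin (n + 2))}
    (hx : x ∈ stem n r s) : infDist x (frontier (stem n r s)) ≤ 2 * r ^ s := by
  set y := x + EuclideanSpace.single 1 (r ^ s - x 1)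
  have hy : y ∉ stem n r s := fun hy => by
    have hle : y 1 ^ 2 ≤ ∑ j ∈ Finset.univ.erase 0, y j ^ 2 :=
      Finset.single_le_sum (fun j _ => sq_nonneg (y j))
        (Finset.mem_erase.2 ⟨by simp, Finset.mem_univ _⟩)
    have hy1 : y 1 = r ^ s := by simp [y]
    linarith [hy.2.2, hy1 ▸ hle]
  have hx1 := abs_lt.1 (abs_apply_lt_of_mem_stem hr hx (i := 1) (by simp))
  calc infDist x (frontier (stem n r s)) ≤ dist x y :=
        infDist_frontier_le_dist_of_mem_of_notMem hx hy
    _ = |r ^ s - x 1| := by simp [y, dist_eq_norm]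
    _ ≤ 2 * r ^ s := abs_le.2 ⟨by linarith, by linarith⟩

theorem volume_stem_le (hr : 0 < r) :
    volume (stem n r s) ≤ ENNReal.ofReal (r * (2 * r ^ s) ^ (n + 1)) := by
  let t : Fin (n + 2) → Set ℝ := Fin.cons (Set.Ioo 0 r) fun _ => Set.Ioo (-r ^ s) (r ^ s)
  have hsub : stem n r s ⊆ (MeasurableEquiv.toLp 2 (Fin (n + 2) → ℝ)).symm ⁻¹' Set.univ.pi t := by
    intro x hx i _
    cases i using Fin.cases with
    | zero => exact ⟨hx.1, hx.2.1⟩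
    | succ j => exact abs_lt.1 (abs_apply_lt_of_mem_stem hr hx (Fin.succ_ne_zero j))
  have ht : MeasurableSet (Set.univ.pi t) :=
    MeasurableSet.univ_pi fun i => by cases i using Fin.cases <;> exact measurableSet_Ioo
  calc volume (stem n r s)
      ≤ volume ((MeasurableEquiv.toLp 2 (Fin (n + 2) → ℝ)).symm ⁻¹' Set.univ.pi t) :=
        measure_mono hsub
    _ = ∏ i, volume (t i) := by
        rw [(EuclideanSpace.volume_preserving_symm_measurableEquiv_toLp _).measure_preimage
          ht.nullMeasurableSet, volume_pi_pi]
    _ = ENNReal.ofReal (r * (2 * r ^ s) ^ (n + 1)) := by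
        simp only [t, Fin.prod_univ_succ, Fin.cons_zero, Fin.cons_succ, Finset.prod_const,
          Finset.card_univ, Fintype.card_fin, Real.volume_Ioo, sub_zero, sub_neg_eq_add, ← two_mul]
        rw [ENNReal.ofReal_mul hr.le, ENNReal.ofReal_pow (by positivity)]

theorem inv_rpow_mul_rpow_mul_rpow_eq (hr : 0 < r) (p δ : ℝ) :
    r⁻¹ ^ p * (r ^ s) ^ (p * (1 - δ)) * (r * (r ^ s) ^ (n + 1)) =
      r ^ (s * (((n : ℝ) + 2) - p * δ) + (s - 1) * (p - 1)) := by
  rw [show s * ((n + 2 : ℝ) - p * δ) + (s - 1) * (p - 1) =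
      -p + s * (p * (1 - δ)) + (1 + s * ((n : ℝ) + 1)) by ring,
    Real.rpow_add hr, Real.rpow_add hr, Real.rpow_add hr, Real.rpow_one, Real.rpow_mul hr.le,
    Real.rpow_mul hr.le, Real.rpow_neg hr.le, Real.inv_rpow hr.le, ← Real.rpow_natCast]
  push_cast
  ring

end Stem

theorem stmt_10_general (n : ℕ) (p δ τ s : ℝ) (hp : 1 ≤ p) (hδ : δ ∈ Set.Ioo (0:ℝ) 1)
    (hτ : 0 < τ) :
    ∃ C : ℝ, 0 < C ∧ ∀ r : ℝ, 0 < r → r < 1 →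
      (∫⁻ x in stem n r s,
          ∫⁻ y in stem n r s ∩ ball x (τ * infDist x (frontier (stem n r s))),
            ENNReal.ofReal
              (|x 0 / r - y 0 / r| ^ p / dist x y ^ (((n : ℝ) + 2) + p * δ))) ≤
        ENNReal.ofReal
          (C * r ^ (s * (((n : ℝ) + 2) - p * δ) + (s - 1) * (p - 1))) := by
  have hd : (finrank ℝ (EuclideanSpace ℝ (Fin (n + 2))) : ℝ) = n + 2 := by simp
  obtain ⟨c, hc, hlocal⟩ := exists_setLIntegral_inter_ball_fractional_le
    (volume : Measure (EuclideanSpace ℝ (Fin (n + 2)))) (by simp) (by linarith : 0 < p) hδ.2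
  rw [hd] at hlocal
  refine ⟨c * (2 * τ) ^ (p * (1 - δ)) * 2 ^ (n + 1), by positivity, fun r hr _ => ?_⟩
  set K := c * r⁻¹ ^ p * (τ * (2 * r ^ s)) ^ (p * (1 - δ))
  have hinner : ∀ x ∈ stem n r s,
      ∫⁻ y in stem n r s ∩ ball x (τ * infDist x (frontier (stem n r s))),
      ENNReal.ofReal (|x 0 / r - y 0 / r| ^ p / dist x y ^ (((n : ℝ) + 2) + p * δ)) ≤
        ENNReal.ofReal K := fun x hx => by
    have hρ : 0 ≤ τ * infDist x (frontier (stem n r s)) := mul_nonneg hτ.le infDist_nonneg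
    refine (hlocal (fun x => x 0 / r) r⁻¹ (by positivity)
      (abs_apply_div_sub_apply_div_le hr · · 0) _ x _ hρ).trans (ENNReal.ofReal_le_ofReal ?_)
    have hα : 0 ≤ p * (1 - δ) := mul_nonneg (by linarith) (by linarith [hδ.2])
    have hdist := infDist_frontier_stem_le hr hx
    simp only [K]
    gcongr
  calc _ ≤ ∫⁻ _ in stem n r s, ENNReal.ofReal K := setLIntegral_mono measurable_const hinner
    _ = ENNReal.ofReal K * volume (stem n r s) := setLIntegral_const _ _
    _ ≤ ENNReal.ofReal K * ENNReal.ofReal (r * (2 * r ^ s) ^ (n + 1)) := by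
        gcongr
        exact volume_stem_le hr
    _ = _ := by
        rw [← ENNReal.ofReal_mul (by positivity), ← inv_rpow_mul_rpow_mul_rpow_eq hr]
        simp only [K]
        rw [show τ * (2 * r ^ s) = 2 * τ * r ^ s by ring,
          Real.mul_rpow (by positivity) (by positivity), mul_pow]
        ring_nf

/-- For the linear profile `u(x) = x₁/r` on the stem `P` of height `r` and radius `r^s`,
the localized fractional `(p,δ)`-energy is bounded by `C r^{s(n−pδ)+(s−1)(p−1)}`,
with `C` depending only on `n, p, δ, τ`. -/
theorem stmt_10 (n : ℕ) (p δ τ s : ℝ) (hp : 1 ≤ p) (hδ : δ ∈ Set.Ioo (0:ℝ) 1)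
    (hτ : 0 < τ) (hs : 1 ≤ s) :
    ∃ C : ℝ, 0 < C ∧ ∀ r : ℝ, 0 < r → r < 1 →
      (∫⁻ x in stem n r s,
          ∫⁻ y in stem n r s ∩ ball x (τ * infDist x (frontier (stem n r s))),
            ENNReal.ofReal
              (|x 0 / r - y 0 / r| ^ p / dist x y ^ (((n : ℝ) + 2) + p * δ))) ≤
        ENNReal.ofReal
          (C * r ^ (s * (((n : ℝ) + 2) - p * δ) + (s - 1) * (p - 1))) :=
  stmt_10_general n p δ τ s hp hδ hτ
end

section
/- Let W be a countable collection of sets (Whitney cubes) in Ω, each Q ∈ W with a finite chain P(Q) ⊂ W and shadow S(Q) = ⋃{Q₁ ∈ W : Q ∈ P(Q₁)}. Suppose (a) |S(Q)| ≤ C₁ |Q|^{2β/(1+β)} for all Q ∈ W, and (b) sup_{Q₁∈W} ∑_{Q∈P(Q₁)} |Q|^ε ≤ C₂ for ε = (2β/((1+β)q) − 1/p*)·κ > 0, where p* = np/(n−pδ), κ = p/(p−1). Then for every measurable E ⊂ Ω, ∑_{Q∈W} |S(Q)∩E|^κ |Q|^{−κ/p*} ≤ C |E|^{κ(q−1)/q},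 with C depending only on C₁, C₂, n, p, q, β, δ. -/
/-!
Split `|S(Q) ∩ E|^κ` as `|S(Q) ∩ E|^{κ/p - κ/q} · |S(Q) ∩ E| · |S(Q) ∩ E|^{κ/q}` and bound the
three factors by `|E|^{κ/p - κ/q}`, `|S(Q) ∩ E|` and `(C₁ |Q|^{2β/(1+β)})^{κ/q}`. With the weight
`|Q|^{-κ/p*}` this leaves `|E|^{κ/p - κ/q} C₁^{κ/q} ∑_Q |Q|^ε |S(Q) ∩ E|`. Covering each shadow by
the cubes `Q₁` with `Q ∈ P(Q₁)` and exchanging the two sums turns the last sum into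
`∑_{Q₁} (∑_{Q ∈ P(Q₁)} |Q|^ε) |Q₁ ∩ E| ≤ C₂ |E|`, by the almost disjointness of the cubes.
-/

open MeasureTheory ENNReal Function

theorem ENNReal.tsum_mul_tsum_indicator_mem {ι : Type*} (P : ι → Finset ι) (a b : ι → ℝ≥0∞) :
    ∑' i, a i * ∑' j, {j | i ∈ P j}.indicator b j = ∑' j, (∑ i ∈ P j, a i) * b j := by
  classical
  simp_rw [← ENNReal.tsum_mul_left]
  rw [ENNReal.tsum_comm]
  refine tsum_congr fun j => ?_
  rw [Finset.sum_mul, tsum_eq_sum (s := P j) fun i hi => by simp [hi]]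
  exact Finset.sum_congr rfl fun i hi => by simp [hi]

theorem ENNReal.rpow_add_one_add_mul_rpow_le {x e w C : ℝ≥0∞} {a c γ t : ℝ} (ha : 0 ≤ a)
    (hc : 0 ≤ c) (hxe : x ≤ e) (hxw : x ≤ C * w ^ γ) (hw0 : w ≠ 0) (hwt : w ≠ ⊤) :
    x ^ (a + 1 + c) * w ^ t ≤ e ^ a * C ^ c * (w ^ (γ * c + t) * x) :=
  calc x ^ (a + 1 + c) * w ^ t = x ^ a * x * x ^ c * w ^ t := by
        rw [ENNReal.rpow_add_of_nonneg _ _ (by positivity) hc,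
          ENNReal.rpow_add_of_nonneg _ _ ha zero_le_one, ENNReal.rpow_one]
    _ ≤ e ^ a * x * (C * w ^ γ) ^ c * w ^ t := by gcongr
    _ = e ^ a * C ^ c * (w ^ (γ * c + t) * x) := by
        rw [ENNReal.mul_rpow_of_nonneg _ _ hc, ← ENNReal.rpow_mul,
          ENNReal.rpow_add _ _ hw0 hwt]
        ring

section

variable {α ι : Type*} [MeasurableSpace α] {μ : Measure α}

theorem tsum_measure_inter_le_of_aedisjoint {W : ι → Set α} (hWm : ∀ i, MeasurableSet (W i))
    (hW : Pairwise (AEDisjoint μ on W)) (E : Set α) :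
    ∑' i, μ (W i ∩ E) ≤ μ E := by
  have hWE : Pairwise (AEDisjoint (μ.restrict E) on W) := fun i j hij =>
    nonpos_iff_eq_zero.mp ((μ.restrict_apply_le E _).trans_eq (hW hij))
  calc ∑' i, μ (W i ∩ E) = ∑' i, μ.restrict E (W i) := by
        simp only [Measure.restrict_apply (hWm _)]
    _ ≤ μ.restrict E (⋃ i, W i) :=
        tsum_meas_le_meas_iUnion_of_disjoint₀ _ (fun i => (hWm i).nullMeasurableSet) hWE
    _ ≤ μ E := (measure_mono (Set.subset_univ _)).trans_eq (μ.restrict_apply_univ E)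

theorem measure_biUnion_inter_le_tsum_indicator [Countable ι] (μ : Measure α) (W : ι → Set α)
    (s : Set ι) (E : Set α) :
    μ ((⋃ j ∈ s, W j) ∩ E) ≤ ∑' j, s.indicator (fun j => μ (W j ∩ E)) j := by
  rw [Set.iUnion₂_inter, ← tsum_subtype]
  exact measure_biUnion_le μ s.to_countable _

theorem tsum_mul_measure_biUnion_inter_le [Countable ι] {W : ι → Set α}
    (hWm : ∀ i, MeasurableSet (W i)) (hW : Pairwise (AEDisjoint μ on W)) (P : ι → Finset ι)
    {a : ι → ℝ≥0∞} {C : ℝ≥0∞} (hchain : ∀ j, ∑ i ∈ P j, a i ≤ C) (E : Set α) :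
    ∑' i, a i * μ ((⋃ j ∈ {j | i ∈ P j}, W j) ∩ E) ≤ C * μ E :=
  calc ∑' i, a i * μ ((⋃ j ∈ {j | i ∈ P j}, W j) ∩ E)
      ≤ ∑' i, a i * ∑' j, {j | i ∈ P j}.indicator (fun j => μ (W j ∩ E)) j :=
        ENNReal.tsum_le_tsum fun _ =>
          mul_le_mul_right (measure_biUnion_inter_le_tsum_indicator μ W _ E) _
    _ = ∑' j, (∑ i ∈ P j, a i) * μ (W j ∩ E) := ENNReal.tsum_mul_tsum_indicator_mem P a _
    _ ≤ ∑' j, C * μ (W j ∩ E) := ENNReal.tsum_le_tsum fun j => mul_le_mul_left (hchain j) _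
    _ = C * ∑' j, μ (W j ∩ E) := ENNReal.tsum_mul_left
    _ ≤ C * μ E := mul_le_mul_right (tsum_measure_inter_le_of_aedisjoint hWm hW E) _

end

theorem stmt_13_general (n : ℕ) (p q δ β : ℝ)
    (hp1 : 1 < p) (hpq : p ≤ q)
    (ι : Type) [Countable ι]
    (Ω : Set (EuclideanSpace ℝ (Fin n))) (W : ι → Set (EuclideanSpace ℝ (Fin n)))
    (hWm : ∀ i, MeasurableSet (W i))
    (hWpos : ∀ i, 0 < volume (W i)) (hWfin : ∀ i, volume (W i) < ⊤)
    (hWdisj : Pairwise fun i j => volume (W i ∩ W j) = 0)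
    (P : ι → Finset ι)
    (S : ι → Set (EuclideanSpace ℝ (Fin n)))
    (hS : ∀ i, S i = ⋃ j ∈ {j | i ∈ P j}, W j)
    (C₁ C₂ : ℝ≥0∞) (hC₁ : C₁ ≠ ⊤) (hC₂ : C₂ ≠ ⊤)
    (hshadow : ∀ i, volume (S i) ≤ C₁ * volume (W i) ^ (2 * β / (1 + β)))
    (hchain : ∀ j, ∑ i ∈ P j,
        volume (W i) ^
          ((2 * β / ((1 + β) * q) - ((n : ℝ) - p * δ) / ((n : ℝ) * p)) * (p / (p - 1)))
      ≤ C₂) :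
    ∃ C : ℝ≥0∞, C ≠ ⊤ ∧
      ∀ E : Set (EuclideanSpace ℝ (Fin n)), MeasurableSet E → E ⊆ Ω →
        ∑' i : ι, volume (S i ∩ E) ^ (p / (p - 1)) *
            volume (W i) ^ (-((p / (p - 1)) * (((n : ℝ) - p * δ) / ((n : ℝ) * p)))) ≤
          C * volume E ^ ((p / (p - 1)) * ((q - 1) / q)) := by
  set κ : ℝ := p / (p - 1)
  set α : ℝ := ((n : ℝ) - p * δ) / ((n : ℝ) * p)
  set ε : ℝ := (2 * β / ((1 + β) * q) - α) * κ
  have hp0 : 0 < p := by linarith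
  have hq0 : 0 < q := by linarith
  have hκ0 : 0 < κ := div_pos hp0 (by linarith)
  have hgap : 0 ≤ κ / p - κ / q := sub_nonneg.mpr (div_le_div_of_nonneg_left hκ0.le hp0 hpq)
  have hκ_split : κ / p - κ / q + 1 + κ / q = κ := by
    simp only [κ]
    field_simp [(by linarith : p - 1 ≠ 0)]
    ring
  have hE_exp : κ / p - κ / q + 1 = κ * ((q - 1) / q) := by
    simp only [κ]
    field_simp [(by linarith : p - 1 ≠ 0)]
    ring
  have hW_exp : 2 * β / (1 + β) * (κ / q) + -(κ * α) = ε := by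
    simp only [ε]
    rw [div_mul_div_comm, sub_mul, div_mul_eq_mul_div]
    ring
  refine ⟨C₁ ^ (κ / q) * C₂, mul_ne_top (rpow_ne_top_of_nonneg (by positivity) hC₁) hC₂, ?_⟩
  intro E _ _
  have hterm : ∀ i, volume (S i ∩ E) ^ κ * volume (W i) ^ (-(κ * α)) ≤
      volume E ^ (κ / p - κ / q) * C₁ ^ (κ / q) * (volume (W i) ^ ε * volume (S i ∩ E)) := by
    intro i
    have := ENNReal.rpow_add_one_add_mul_rpow_le (c := κ / q) (t := -(κ * α)) hgap
      (by positivity) (measure_mono (Set.inter_subset_right (s := S i) (t := E)))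
      ((measure_mono Set.inter_subset_left).trans (hshadow i)) (hWpos i).ne' (hWfin i).ne
    rwa [hκ_split, hW_exp] at this
  have hshadow_sum : ∑' i, volume (W i) ^ ε * volume (S i ∩ E) ≤ C₂ * volume E := by
    simp only [hS]
    exact tsum_mul_measure_biUnion_inter_le hWm hWdisj P hchain E
  calc ∑' i, volume (S i ∩ E) ^ κ * volume (W i) ^ (-(κ * α))
      ≤ volume E ^ (κ / p - κ / q) * C₁ ^ (κ / q) *
          ∑' i, volume (W i) ^ ε * volume (S i ∩ E) := by
        rw [← ENNReal.tsum_mul_left]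
        exact ENNReal.tsum_le_tsum hterm
    _ ≤ volume E ^ (κ / p - κ / q) * C₁ ^ (κ / q) * (C₂ * volume E) := by gcongr
    _ = C₁ ^ (κ / q) * C₂ * volume E ^ (κ * ((q - 1) / q)) := by
        rw [← hE_exp, ENNReal.rpow_add_of_nonneg _ _ hgap zero_le_one, ENNReal.rpow_one]
        ring

/-- Lemma 5.2: shadow summation estimate. Let `W` be a Whitney decomposition of `Ω`
with chains `P(Q)` and shadows `S(Q) = ⋃ {Q₁ : Q ∈ P(Q₁)}`. If
`|S(Q)| ≤ C₁ |Q|^{2β/(1+β)}` and `∑_{Q ∈ P(Q₁)} |Q|^ε ≤ C₂` uniformly, where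
`ε = (2β/((1+β)q) − 1/p*)·κ > 0`, `κ = p/(p−1)`, `p* = np/(n−pδ)`, then for every
measurable `E ⊆ Ω`, `∑_Q |S(Q)∩E|^κ |Q|^{−κ/p*} ≤ C |E|^{κ(q−1)/q}`. -/
theorem stmt_13 (n : ℕ) (hn : 2 ≤ n) (p q δ β : ℝ)
    (hδ : δ ∈ Set.Ioo (0:ℝ) 1) (hβ : β ∈ Set.Ioc (0:ℝ) 1)
    (hp1 : 1 < p) (hpn : p < n / δ) (hpq : p ≤ q)
    (ι : Type) [Countable ι]
    (Ω : Set (EuclideanSpace ℝ (Fin n))) (W : ι → Set (EuclideanSpace ℝ (Fin n)))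
    (hWm : ∀ i, MeasurableSet (W i))
    (hWpos : ∀ i, 0 < volume (W i)) (hWfin : ∀ i, volume (W i) < ⊤)
    (hWdisj : Pairwise fun i j => volume (W i ∩ W j) = 0)
    (hWcover : Ω = ⋃ i, W i)
    (P : ι → Finset ι)
    (S : ι → Set (EuclideanSpace ℝ (Fin n)))
    (hS : ∀ i, S i = ⋃ j ∈ {j | i ∈ P j}, W j)
    (C₁ C₂ : ℝ≥0∞) (hC₁ : C₁ ≠ ⊤) (hC₂ : C₂ ≠ ⊤)
    (hshadow : ∀ i, volume (S i) ≤ C₁ * volume (W i) ^ (2 * β / (1 + β)))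
    (hε : 0 < (2 * β / ((1 + β) * q) - ((n : ℝ) - p * δ) / ((n : ℝ) * p)) * (p / (p - 1)))
    (hchain : ∀ j, ∑ i ∈ P j,
        volume (W i) ^
          ((2 * β / ((1 + β) * q) - ((n : ℝ) - p * δ) / ((n : ℝ) * p)) * (p / (p - 1)))
      ≤ C₂) :
    ∃ C : ℝ≥0∞, C ≠ ⊤ ∧
      ∀ E : Set (EuclideanSpace ℝ (Fin n)), MeasurableSet E → E ⊆ Ω →
        ∑' i : ι, volume (S i ∩ E) ^ (p / (p - 1)) *
            volume (W i) ^ (-((p / (p - 1)) * (((n : ℝ) - p * δ) / ((n : ℝ) * p)))) ≤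
          C * volume E ^ ((p / (p - 1)) * ((q - 1) / q)) :=
  stmt_13_general n p q δ β hp1 hpq ι Ω W hWm hWpos hWfin hWdisj P S hS C₁ C₂ hC₁ hC₂ hshadow hchain
end
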